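/- arXiv:2510.12625 — 3 statements merged into one kernel-verified Lean document; each statement's English description precedes it below -/
import Mathlib

section
/- Let R be a Dedekind domain with fraction field K and let A be a commutative R-algebra that is flat as an R-module; write ι : A → K ⊗[R] A for the canonical algebra map a ↦ 1 ⊗ a (which is injective since A is R-flat). Then the assignments J ↦ (the ideal of K ⊗[R] A generated by ι(J)) and I ↦ ι⁻¹(I) are mutually inverse bijections between the set of ideals J of A for which the quotient A/J is a flat R-module and the set of all ideals of K ⊗[R] A. -/
/-!
`K ⊗[R] A` is the localization of `A` at the image of `R⁰`, so every ideal of it is extended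
from its contraction, and an element `x` of `A` lies in the contraction of the extension of `J`
exactly when `r • x ∈ J` for some `r ≠ 0`. Hence contraction-of-extension is the identity on
the ideals `J` for which `A ⧸ J` is torsion-free, and contractions are always of this kind since
`R⁰` becomes invertible. Over a Dedekind domain torsion-free means flat.
-/

open TensorProduct
open scoped nonZeroDivisors

theorem Ideal.isSMulRegular_quotient_iff {R A : Type*} [CommRing R] [CommRing A] [Algebra R A]
    {J : Ideal A} {r : R} : IsSMulRegular (A ⧸ J) r ↔ ∀ x : A, r • x ∈ J → x ∈ J := by
  rw [isSMulRegular_iff_right_eq_zero_of_smul, Ideal.Quotient.mk_surjective.forall]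
  simp only [← Ideal.Quotient.mkₐ_eq_mk R, ← map_smul]
  simp only [Ideal.Quotient.mkₐ_eq_mk, Ideal.Quotient.eq_zero_iff_mem]

namespace IsLocalization

variable {R A S : Type*} [CommRing R] [CommRing A] [Algebra R A] [CommRing S] [Algebra A S]
  (M : Submonoid R) [IsLocalization (Algebra.algebraMapSubmonoid A M) S]

theorem comap_map_of_isSMulRegular (J : Ideal A) (hJ : ∀ r ∈ M, IsSMulRegular (A ⧸ J) r) :
    (J.map (algebraMap A S)).comap (algebraMap A S) = J := by
  refine le_antisymm (fun x hx => ?_) Ideal.le_comap_map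
  obtain ⟨_, ⟨r, hr, rfl⟩, hrx⟩ :=
    (algebraMap_mem_map_algebraMap_iff (Algebra.algebraMapSubmonoid A M) S J x).mp hx
  exact Ideal.isSMulRegular_quotient_iff.mp (hJ r hr) x (by rwa [Algebra.smul_def])

theorem isSMulRegular_quotient_comap (I : Ideal S) {r : R} (hr : r ∈ M) :
    IsSMulRegular (A ⧸ I.comap (algebraMap A S)) r := by
  refine Ideal.isSMulRegular_quotient_iff.mpr fun x hx => ?_
  have hunit := map_units S (⟨_, Algebra.mem_algebraMapSubmonoid_of_mem ⟨r, hr⟩⟩ :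
    Algebra.algebraMapSubmonoid A M)
  rw [Ideal.mem_comap, Algebra.smul_def, map_mul] at hx
  exact (Ideal.unit_mul_mem_iff_mem I hunit).mp hx

end IsLocalization

theorem stmt_0_general (R K A : Type*) [CommRing R] [IsDedekindDomain R]
    [Field K] [Algebra R K] [IsFractionRing R K]
    [CommRing A] [Algebra R A] :
    (∀ J : Ideal A, Module.Flat R (A ⧸ J) →
      Ideal.comap (Algebra.TensorProduct.includeRight : A →ₐ[R] K ⊗[R] A)
        (Ideal.map (Algebra.TensorProduct.includeRight : A →ₐ[R] K ⊗[R] A) J) = J) ∧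
    (∀ I : Ideal (K ⊗[R] A),
      Module.Flat R
        (A ⧸ Ideal.comap (Algebra.TensorProduct.includeRight : A →ₐ[R] K ⊗[R] A) I) ∧
      Ideal.map (Algebra.TensorProduct.includeRight : A →ₐ[R] K ⊗[R] A)
        (Ideal.comap (Algebra.TensorProduct.includeRight : A →ₐ[R] K ⊗[R] A) I) = I) := by
  let _ : Algebra A (K ⊗[R] A) := Algebra.TensorProduct.rightAlgebra
  refine ⟨fun J _ => IsLocalization.comap_map_of_isSMulRegular R⁰ J
    fun _ hr => Module.Flat.isSMulRegular_of_nonZeroDivisors hr, fun I => ⟨?_,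
    IsLocalization.map_under (Algebra.algebraMapSubmonoid A R⁰) _ I⟩⟩
  have : Module.IsTorsionFree R
      (A ⧸ I.comap (Algebra.TensorProduct.includeRight : A →ₐ[R] K ⊗[R] A)) :=
    ⟨fun _ hr => IsLocalization.isSMulRegular_quotient_comap R⁰ I hr.mem_nonZeroDivisors⟩
  infer_instance

/-- For a Dedekind domain `R` with fraction field `K` and a flat commutative `R`-algebra `A`,
the maps `J ↦ ι(J)·(K ⊗[R] A)` (extension along `ι : A → K ⊗[R] A`, `a ↦ 1 ⊗ a`) and
`I ↦ ι⁻¹(I)` (contraction) are mutually inverse bijections between ideals `J` of `A` with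
`A/J` flat over `R` and all ideals of `K ⊗[R] A`. -/
theorem stmt_0 (R K A : Type*) [CommRing R] [IsDomain R] [IsDedekindDomain R]
    [Field K] [Algebra R K] [IsFractionRing R K]
    [CommRing A] [Algebra R A] [Module.Flat R A] :
    (∀ J : Ideal A, Module.Flat R (A ⧸ J) →
      Ideal.comap (Algebra.TensorProduct.includeRight : A →ₐ[R] K ⊗[R] A)
        (Ideal.map (Algebra.TensorProduct.includeRight : A →ₐ[R] K ⊗[R] A) J) = J) ∧
    (∀ I : Ideal (K ⊗[R] A),
      Module.Flat R
        (A ⧸ Ideal.comap (Algebra.TensorProduct.includeRight : A →ₐ[R] K ⊗[R] A) I) ∧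
      Ideal.map (Algebra.TensorProduct.includeRight : A →ₐ[R] K ⊗[R] A)
        (Ideal.comap (Algebra.TensorProduct.includeRight : A →ₐ[R] K ⊗[R] A) I) = I) :=
  stmt_0_general R K A
end

section
/- Let R be a commutative ring and R' a commutative R-algebra such that the structure map algebraMap R R' is injective. Let A and B be R-modules and suppose A is flat over R. Then the base-change map Hom_R(B, A) → Hom_{R'}(R' ⊗[R] B, R' ⊗[R] A), sending an R-linear map f to its extension of scalars f ⊗ id_{R'}, is injective. -/
/-- If `R → R'` is an injective map of commutative rings, `A`, `B` are `R`-modules with `A`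
flat over `R`, then the base-change map `Hom_R(B, A) → Hom_{R'}(R' ⊗[R] B, R' ⊗[R] A)`,
`f ↦ f ⊗ id`, is injective. -/
theorem stmt_2 (R R' A B : Type*) [CommRing R] [CommRing R'] [Algebra R R']
    (hinj : Function.Injective (algebraMap R R'))
    [AddCommGroup A] [Module R A] [AddCommGroup B] [Module R B]
    [Module.Flat R A] :
    Function.Injective (fun f : B →ₗ[R] A => LinearMap.baseChange R' f) := by
  have : FaithfulSMul R R' := (faithfulSMul_iff_algebraMap_injective R R').mpr hinj
  exact LinearMap.baseChangeHom_injective R B R' (N := A)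
end

section
/- Let Γ be a group such that the quotient D(Γ)/D²(Γ) of its derived subgroup by its second derived subgroup is cyclic of order 3, and such that D²(Γ) is finite of order at most 11. Then D²(Γ) is a 2-group, i.e., its order is a power of 2. -/
/-!
Write `K = D(Γ)` and `N = D(K) = D²(Γ)`. Automorphism groups of cyclic groups are abelian, so the
derived subgroup of any group centralises each of its cyclic normal subgroups. If `N` is cyclic,
this makes `N` central in `K`; as `K / N` is cyclic, `K` is then abelian, i.e. `N = 1`.

If `|N|` is squarefree, `N` is a Z-group, so `N / D(N)` and `D(N)` are cyclic: the same argument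
with `K` in place of `Γ` shows that `N` is abelian, hence cyclic, hence trivial. The only order
`≤ 11` left that is neither squarefree nor a power of `2` is `9`. Then `K` is a `3`-group, so it is
nilpotent, and a nilpotent group with cyclic abelianization is abelian because
`[K, D(K)] = D(K)` whenever `K / D(K)` is cyclic.
-/

open scoped commutatorElement

theorem commutator_le_centralizer_of_isCyclic {G : Type*} [Group G] (M : Subgroup G)
    [M.Normal] [IsCyclic M] : commutator G ≤ Subgroup.centralizer (M : Set G) := by
  let _ : CommGroup (MulAut M) := (IsCyclic.mulAutMulEquiv M).toMonoidHom.commGroupOfInjective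
    (IsCyclic.mulAutMulEquiv M).injective
  intro g hg m hm
  have hconj := congrArg (fun e : MulAut M => (e ⟨m, hm⟩ : G))
    (Abelianization.commutator_subset_ker (MulAut.conjNormal : G →* MulAut M) hg)
  rw [MulAut.conjNormal_apply, MulAut.one_apply, mul_inv_eq_iff_eq_mul] at hconj
  exact hconj.symm

theorem commutator_commutator_eq_bot_of_isCyclic (Γ : Type*) [Group Γ]
    [IsCyclic (Abelianization (commutator Γ))] [IsCyclic (commutator (commutator Γ))] :
    commutator (commutator Γ) = ⊥ := by
  set K := commutator Γ
  have : IsCyclic (⁅K, K⁆ : Subgroup Γ) := by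
    let e := (commutator K).equivMapOfInjective K.subtype K.subtype_injective
    rw [K.map_subtype_commutator] at e
    exact isCyclic_of_surjective e e.surjective
  have hcent : commutator K ≤ Subgroup.center K := fun m hm =>
    Subgroup.mem_center_iff.mpr fun k => Subtype.ext <| Eq.symm <|
      commutator_le_centralizer_of_isCyclic ⁅K, K⁆ k.2 m (K.map_subtype_commutator ▸ ⟨m, hm, rfl⟩)
  rw [← Abelianization.ker_of] at hcent
  let _ := commGroupOfCyclicCenterQuotient Abelianization.of hcent
  exact (commutator_eq_bot_iff K).mpr inferInstance

theorem commutator_top_eq_commutator_of_isCyclic_abelianization (G : Type*) [Group G]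
    [IsCyclic (Abelianization G)] : ⁅commutator G, ⊤⁆ = commutator G := by
  set K : Subgroup G := ⁅commutator G, ⊤⁆
  have hK : K ≤ commutator G := Subgroup.commutator_le_left _ _
  let f : G ⧸ K →* Abelianization G :=
    QuotientGroup.lift K Abelianization.of fun k hk => (Abelianization.ker_of G).ge (hK hk)
  have hker : f.ker ≤ Subgroup.center (G ⧸ K) := by
    intro q hq
    obtain ⟨x, rfl⟩ := QuotientGroup.mk_surjective q
    have hx : x ∈ commutator G := (Abelianization.ker_of G).le hq
    refine Subgroup.mem_center_iff.mpr fun y => ?_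
    obtain ⟨g, rfl⟩ := QuotientGroup.mk_surjective y
    refine (commutatorElement_eq_one_iff_mul_comm.mp ?_).symm
    exact (QuotientGroup.eq_one_iff ⁅x, g⁆).mpr
      (Subgroup.commutator_mem_commutator hx (Subgroup.mem_top g))
  let _ := commGroupOfCyclicCenterQuotient f hker
  refine le_antisymm hK ?_
  simpa using Abelianization.commutator_subset_ker (QuotientGroup.mk' K)

theorem commutator_eq_bot_of_isNilpotent_of_isCyclic_abelianization (G : Type*) [Group G]
    [Group.IsNilpotent G] [IsCyclic (Abelianization G)] : commutator G = ⊥ := by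
  have hlcs : ∀ n, (⊤ : Subgroup G).lowerCentralSeries (n + 1) = commutator G := by
    intro n
    induction n with
    | zero => rfl
    | succ n ih =>
      rw [Subgroup.lowerCentralSeries_succ, ih,
        commutator_top_eq_commutator_of_isCyclic_abelianization]
  obtain ⟨n, hn⟩ := Subgroup.nilpotent_iff_lowerCentralSeries.mp ‹Group.IsNilpotent G›
  rw [← hlcs n, Subgroup.lowerCentralSeries_succ, hn, Subgroup.commutator_bot_left]

theorem commutator_commutator_eq_bot_of_card_eq_prime_pow (Γ : Type*) [Group Γ] {p k : ℕ}
    [Fact p.Prime] (hp : Nat.card (Abelianization (commutator Γ)) = p)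
    (hk : Nat.card (commutator (commutator Γ)) = p ^ k) :
    commutator (commutator Γ) = ⊥ := by
  have hK : Nat.card (commutator Γ) = p ^ (k + 1) := by
    rw [pow_succ', ← hk, ← hp]
    exact Subgroup.card_eq_card_quotient_mul_card_subgroup _
  have : Finite (commutator Γ) :=
    Nat.finite_of_card_ne_zero (hK ▸ pow_ne_zero _ (Fact.out : p.Prime).ne_zero)
  have : Group.IsNilpotent (commutator Γ) := (IsPGroup.of_card hK).isNilpotent
  have : IsCyclic (Abelianization (commutator Γ)) := isCyclic_of_prime_card hp
  exact commutator_eq_bot_of_isNilpotent_of_isCyclic_abelianization _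

theorem commutator_commutator_eq_bot_of_squarefree (Γ : Type*) [Group Γ]
    [IsCyclic (Abelianization (commutator Γ))] [Finite (commutator (commutator Γ))]
    (hsq : Squarefree (Nat.card (commutator (commutator Γ)))) :
    commutator (commutator Γ) = ⊥ := by
  set N := commutator (commutator Γ)
  have := IsZGroup.of_squarefree hsq
  have := IsZGroup.isCyclic_commutator N
  have hN : commutator N = ⊥ := commutator_commutator_eq_bot_of_isCyclic (commutator Γ)
  have : Group.IsNilpotent N := Subgroup.nilpotent_iff_lowerCentralSeries.mpr ⟨1, hN⟩
  exact commutator_commutator_eq_bot_of_isCyclic Γ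

/-- If `Γ` is a group with `D(Γ)/D²(Γ)` cyclic of order 3 (equivalently, the abelianization
of the derived subgroup has cardinality 3) and `D²(Γ)` is finite of order at most 11, then
`D²(Γ)` is a 2-group. -/
theorem stmt_5 (Γ : Type*) [Group Γ]
    (h3 : Nat.card (Abelianization ↥(commutator Γ)) = 3)
    [Finite ↥(commutator ↥(commutator Γ))]
    (h11 : Nat.card ↥(commutator ↥(commutator Γ)) ≤ 11) :
    ∃ k : ℕ, Nat.card ↥(commutator ↥(commutator Γ)) = 2 ^ k := by
  have : Fact (Nat.Prime 3) := ⟨Nat.prime_three⟩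
  have : IsCyclic (Abelianization (commutator Γ)) := isCyclic_of_prime_card h3
  have hcases : ∀ n < 12, n ≠ 0 → Squarefree n ∨ n = 3 ^ 2 ∨ n = 2 ^ 2 ∨ n = 2 ^ 3 := by
    decide +kernel
  rcases hcases _ (Nat.lt_succ_of_le h11) Nat.card_pos.ne' with hsq | h9 | h4 | h8
  · rw [commutator_commutator_eq_bot_of_squarefree Γ hsq, Subgroup.card_bot]
    exact ⟨0, rfl⟩
  · rw [commutator_commutator_eq_bot_of_card_eq_prime_pow Γ h3 h9, Subgroup.card_bot]
    exact ⟨0, rfl⟩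
  · exact ⟨2, h4⟩
  · exact ⟨3, h8⟩
end
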